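/- Let H be a Hopf algebra with bijective antipode, N a left-left Yetter-Drinfeld module and M a left-left anti-Yetter-Drinfeld module. Then N⊗M with diagonal action h(n⊗m) = h⁽¹⁾n ⊗ h⁽²⁾m and codiagonal coaction Δ(n⊗m) = n⁽⁻¹⁾m⁽⁻¹⁾ ⊗ n⁽⁰⁾ ⊗ m⁽⁰⁾ is a left-left anti-Yetter-Drinfeld module. -/

import Mathlib

open TensorProduct LinearMap Coalgebra

noncomputable section

variable (k : Type) [Field k] (H : Type) [Ring H] [HopfAlgebra k H]
variable (M : Type) [AddCommGroup M] [Module k M]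
variable (N : Type) [AddCommGroup N] [Module k N]

/-- The right-hand side `h⁽¹⁾m⁽⁻¹⁾S⁻¹(h⁽³⁾) ⊗ h⁽²⁾m⁽⁰⁾` of the left-left
anti-Yetter-Drinfeld condition, as a linear map `H ⊗ M → H ⊗ M`, where `Sinv` plays
the role of the inverse of the antipode. -/
def aydRHSll (Sinv : H →ₗ[k] H) (act : H ⊗[k] M →ₗ[k] M)
    (coact : M →ₗ[k] H ⊗[k] M) : H ⊗[k] M →ₗ[k] H ⊗[k] M :=
  map (mul' k H ∘ₗ map (mul' k H) Sinv) act
    ∘ₗ (TensorProduct.assoc k (H ⊗[k] H) H (H ⊗[k] M)).symm.toLinearMap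
    ∘ₗ map LinearMap.id
        ((TensorProduct.leftComm k H H M).toLinearMap
          ∘ₗ (TensorProduct.assoc k H H M).toLinearMap)
    ∘ₗ (tensorTensorTensorComm k H (H ⊗[k] H) H M).toLinearMap
    ∘ₗ map (map LinearMap.id comul ∘ₗ comul) coact

/-- The left-left (anti-)Yetter-Drinfeld condition with `Sinv` in the third leg:
`Δ_M(h·m) = h⁽¹⁾m⁽⁻¹⁾Sinv(h⁽³⁾) ⊗ h⁽²⁾m⁽⁰⁾`. For `Sinv = S⁻¹` this is the
anti-Yetter-Drinfeld condition; for `Sinv = S` it is the Yetter-Drinfeld condition. -/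
def IsAYDll (Sinv : H →ₗ[k] H) (act : H ⊗[k] M →ₗ[k] M)
    (coact : M →ₗ[k] H ⊗[k] M) : Prop :=
  coact ∘ₗ act = aydRHSll k H M Sinv act coact


/-- Diagonal action `h(n⊗m) = h⁽¹⁾n ⊗ h⁽²⁾m` on `N ⊗ M`. -/
def diagAct (actN : H ⊗[k] N →ₗ[k] N) (actM : H ⊗[k] M →ₗ[k] M) :
    H ⊗[k] (N ⊗[k] M) →ₗ[k] N ⊗[k] M :=
  map actN actM ∘ₗ (tensorTensorTensorComm k H H N M).toLinearMap
    ∘ₗ map comul LinearMap.id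

/-- Codiagonal coaction `Δ(n⊗m) = n⁽⁻¹⁾m⁽⁻¹⁾ ⊗ n⁽⁰⁾ ⊗ m⁽⁰⁾` on `N ⊗ M`. -/
def codiagCoact (coactN : N →ₗ[k] H ⊗[k] N) (coactM : M →ₗ[k] H ⊗[k] M) :
    N ⊗[k] M →ₗ[k] H ⊗[k] (N ⊗[k] M) :=
  map (mul' k H) LinearMap.id ∘ₗ (tensorTensorTensorComm k H N H M).toLinearMap
    ∘ₗ map coactN coactM

/-! Expanding `h·(n ⊗ m) = h₁n ⊗ h₂m` and applying the Yetter-Drinfeld condition to `h₁n` and the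
anti-Yetter-Drinfeld condition to `h₂m`, the coaction of `h·(n ⊗ m)` becomes
`h₁ n₋₁ S(h₃) h₄ m₋₁ S⁻¹(h₆) ⊗ h₂n₀ ⊗ h₅m₀`. The antipode axiom collapses `S(h₃)h₄` to `ε(h₃)`,
leaving `h₁ n₋₁ m₋₁ S⁻¹(h₄) ⊗ h₂n₀ ⊗ h₃m₀`, which is the anti-Yetter-Drinfeld right-hand side for
`N ⊗ M`. Both sides factor through one evaluation map `H^⊗5 ⊗ (H ⊗ N) ⊗ (H ⊗ M) → H ⊗ (N ⊗ M)`,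
so the identity reduces to one between iterated coproducts in `H^⊗5`. -/

section Coproducts
variable {R A : Type*} [CommSemiring R] [Semiring A] [HopfAlgebra R A]

variable (R A) in
def contractMiddle (f : A →ₗ[R] A) :
    (A ⊗[R] (A ⊗[R] A)) ⊗[R] (A ⊗[R] (A ⊗[R] A)) →ₗ[R] A ⊗[R] (A ⊗[R] (A ⊗[R] (A ⊗[R] A))) :=
  lTensor A (lTensor A (rTensor (A ⊗[R] A) (mul' R A ∘ₗ rTensor A f)))
    ∘ₗ lTensor A (lTensor A (TensorProduct.assoc R A A (A ⊗[R] A)).symm.toLinearMap)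
    ∘ₗ lTensor A (TensorProduct.assoc R A A (A ⊗[R] (A ⊗[R] A))).toLinearMap
    ∘ₗ (TensorProduct.assoc R A (A ⊗[R] A) (A ⊗[R] (A ⊗[R] A))).toLinearMap

@[simp]
lemma contractMiddle_tmul (f : A →ₗ[R] A) (x₁ x₂ x₃ y₁ y₂ y₃ : A) :
    contractMiddle R A f ((x₁ ⊗ₜ (x₂ ⊗ₜ x₃)) ⊗ₜ (y₁ ⊗ₜ (y₂ ⊗ₜ y₃)))
      = x₁ ⊗ₜ (x₂ ⊗ₜ ((f x₃ * y₁) ⊗ₜ (y₂ ⊗ₜ y₃))) := rfl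

/- In Sweedler notation: `h₁₁ ⊗ h₁₂ ⊗ S(h₁₃)h₂₁ ⊗ h₂₂ ⊗ h₂₃ = h₁ ⊗ h₂ ⊗ 1 ⊗ h₃ ⊗ h₄`. -/
lemma contractMiddle_antipode_comp_comul :
    contractMiddle R A (HopfAlgebra.antipode R)
        ∘ₗ map (lTensor A comul ∘ₗ comul) (lTensor A comul ∘ₗ comul) ∘ₗ comul
      = lTensor A (lTensor A (mk R A (A ⊗[R] A) 1)) ∘ₗ lTensor A (lTensor A comul)
          ∘ₗ lTensor A comul ∘ₗ comul := by
  have coassoc₅ : lTensor A (lTensor A (TensorProduct.assoc R A A (A ⊗[R] A)).symm.toLinearMap)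
      ∘ₗ lTensor A (TensorProduct.assoc R A A (A ⊗[R] (A ⊗[R] A))).toLinearMap
      ∘ₗ (TensorProduct.assoc R A (A ⊗[R] A) (A ⊗[R] (A ⊗[R] A))).toLinearMap
      ∘ₗ map (lTensor A comul ∘ₗ comul) (lTensor A comul ∘ₗ comul) ∘ₗ comul
      = lTensor A (lTensor A (rTensor (A ⊗[R] A) comul ∘ₗ lTensor A comul ∘ₗ comul))
          ∘ₗ lTensor A comul ∘ₗ comul := by
    simp only [coassoc_simps]
  have contract : rTensor (A ⊗[R] A) (mul' R A ∘ₗ rTensor A (HopfAlgebra.antipode R))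
      ∘ₗ rTensor (A ⊗[R] A) comul ∘ₗ lTensor A comul ∘ₗ comul
      = mk R A (A ⊗[R] A) 1 ∘ₗ (comul (R := R) (A := A)) := by
    rw [← comp_assoc, ← rTensor_comp, comp_assoc, HopfAlgebra.mul_antipode_rTensor_comul,
      ← comp_assoc, rTensor_comp_lTensor, ← lTensor_comp_rTensor, rTensor_comp, comp_assoc,
      comp_assoc, rTensor_counit_comp_comul]
    ext; simp
  rw [contractMiddle]
  simp only [comp_assoc]
  rw [coassoc₅, ← comp_assoc, ← lTensor_comp, ← lTensor_comp, contract, lTensor_comp,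
    lTensor_comp, comp_assoc]

end Coproducts

section Modules

variable {P Q X : Type} [AddCommGroup P] [Module k P] [AddCommGroup Q] [Module k Q]
  [AddCommGroup X] [Module k X]

def aydEval (Sv : H →ₗ[k] H) (act : X ⊗[k] P →ₗ[k] P) :
    (H ⊗[k] (X ⊗[k] H)) ⊗[k] (H ⊗[k] P) →ₗ[k] H ⊗[k] P :=
  map (mul' k H ∘ₗ map (mul' k H) Sv) act
    ∘ₗ (TensorProduct.assoc k (H ⊗[k] H) H (X ⊗[k] P)).symm.toLinearMap
    ∘ₗ map LinearMap.id
        ((TensorProduct.leftComm k X H P).toLinearMap ∘ₗ (TensorProduct.assoc k X H P).toLinearMap)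
    ∘ₗ (tensorTensorTensorComm k H (X ⊗[k] H) H P).toLinearMap

variable (P Q) in
def mulTensor : (H ⊗[k] P) ⊗[k] (H ⊗[k] Q) →ₗ[k] H ⊗[k] (P ⊗[k] Q) :=
  map (mul' k H) LinearMap.id ∘ₗ (tensorTensorTensorComm k H P H Q).toLinearMap

def tensorAydEval (Sv : H →ₗ[k] H) (actN : H ⊗[k] N →ₗ[k] N) (actM : H ⊗[k] M →ₗ[k] M) :
    (H ⊗[k] (H ⊗[k] (H ⊗[k] (H ⊗[k] H)))) ⊗[k] ((H ⊗[k] N) ⊗[k] (H ⊗[k] M))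
      →ₗ[k] H ⊗[k] (N ⊗[k] M) :=
  mulTensor k H N M
    ∘ₗ map (map (mul' k H) actN ∘ₗ (tensorTensorTensorComm k H H H N).toLinearMap)
        (aydEval k H Sv actM)
    ∘ₗ (tensorTensorTensorComm k (H ⊗[k] H) (H ⊗[k] (H ⊗[k] H)) (H ⊗[k] N) (H ⊗[k] M)).toLinearMap
    ∘ₗ rTensor _ (TensorProduct.assoc k H H (H ⊗[k] (H ⊗[k] H))).symm.toLinearMap

variable {k H M N}

@[simp]
lemma aydEval_tmul (Sv : H →ₗ[k] H) (act : X ⊗[k] P →ₗ[k] P) (x₁ x₃ a : H) (x₂ : X) (p : P) :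
    aydEval k H Sv act ((x₁ ⊗ₜ (x₂ ⊗ₜ x₃)) ⊗ₜ (a ⊗ₜ p)) = (x₁ * a * Sv x₃) ⊗ₜ act (x₂ ⊗ₜ p) := by
  simp [aydEval]

lemma aydRHSll_eq (Sv : H →ₗ[k] H) (act : H ⊗[k] P →ₗ[k] P) (coact : P →ₗ[k] H ⊗[k] P) :
    aydRHSll k H P Sv act coact = aydEval k H Sv act ∘ₗ map (lTensor H comul ∘ₗ comul) coact := by
  simp only [aydRHSll, aydEval, comp_assoc]
  rfl

lemma aydEval_comp_rTensor {Y : Type} [AddCommGroup Y] [Module k Y] (Sv : H →ₗ[k] H)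
    (act : X ⊗[k] P →ₗ[k] P) (f : Y →ₗ[k] X) :
    aydEval k H Sv (act ∘ₗ rTensor P f)
      = aydEval k H Sv act ∘ₗ rTensor (H ⊗[k] P) (lTensor H (rTensor H f)) := by
  ext; simp

@[simp]
lemma mulTensor_tmul (a b : H) (p : P) (q : Q) :
    mulTensor k H P Q ((a ⊗ₜ p) ⊗ₜ (b ⊗ₜ q)) = (a * b) ⊗ₜ (p ⊗ₜ q) := by
  simp [mulTensor]

lemma codiagCoact_eq (coactN : N →ₗ[k] H ⊗[k] N) (coactM : M →ₗ[k] H ⊗[k] M) :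
    codiagCoact k H M N coactN coactM = mulTensor k H N M ∘ₗ map coactN coactM := by
  simp only [codiagCoact, mulTensor, comp_assoc]

lemma diagAct_eq (actN : H ⊗[k] N →ₗ[k] N) (actM : H ⊗[k] M →ₗ[k] M) :
    diagAct k H M N actN actM
      = (map actN actM ∘ₗ (tensorTensorTensorComm k H H N M).toLinearMap) ∘ₗ rTensor _ comul := by
  simp only [diagAct, comp_assoc]
  rfl

@[simp]
lemma tensorAydEval_tmul (Sv : H →ₗ[k] H) (actN : H ⊗[k] N →ₗ[k] N) (actM : H ⊗[k] M →ₗ[k] M)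
    (g₁ g₂ g₃ g₄ g₅ a b : H) (n : N) (m : M) :
    tensorAydEval k H M N Sv actN actM
        ((g₁ ⊗ₜ (g₂ ⊗ₜ (g₃ ⊗ₜ (g₄ ⊗ₜ g₅)))) ⊗ₜ ((a ⊗ₜ n) ⊗ₜ (b ⊗ₜ m)))
      = (g₁ * a * (g₃ * b * Sv g₅)) ⊗ₜ (actN (g₂ ⊗ₜ n) ⊗ₜ actM (g₄ ⊗ₜ m)) := by
  simp [tensorAydEval]

theorem codiagCoact_comp_diagAct {Sv₁ Sv₂ : H →ₗ[k] H}
    {actN : H ⊗[k] N →ₗ[k] N} {coactN : N →ₗ[k] H ⊗[k] N}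
    {actM : H ⊗[k] M →ₗ[k] M} {coactM : M →ₗ[k] H ⊗[k] M}
    (hN : IsAYDll k H N Sv₁ actN coactN) (hM : IsAYDll k H M Sv₂ actM coactM) :
    codiagCoact k H M N coactN coactM ∘ₗ diagAct k H M N actN actM
      = tensorAydEval k H M N Sv₂ actN actM
          ∘ₗ map (contractMiddle k H Sv₁
              ∘ₗ map (lTensor H comul ∘ₗ comul) (lTensor H comul ∘ₗ comul) ∘ₗ comul)
            (map coactN coactM) := by
  have eval : mulTensor k H N M ∘ₗ map (aydEval k H Sv₁ actN) (aydEval k H Sv₂ actM)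
        ∘ₗ (tensorTensorTensorComm k _ _ (H ⊗[k] N) (H ⊗[k] M)).toLinearMap
      = tensorAydEval k H M N Sv₂ actN actM ∘ₗ rTensor _ (contractMiddle k H Sv₁) := by
    ext; simp [mul_assoc]
  calc codiagCoact k H M N coactN coactM ∘ₗ diagAct k H M N actN actM
      = mulTensor k H N M ∘ₗ map (coactN ∘ₗ actN) (coactM ∘ₗ actM)
          ∘ₗ (tensorTensorTensorComm k H H N M).toLinearMap ∘ₗ rTensor _ comul := by
        rw [codiagCoact_eq, diagAct_eq, map_comp]
        simp only [comp_assoc]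
    _ = (mulTensor k H N M ∘ₗ map (aydEval k H Sv₁ actN) (aydEval k H Sv₂ actM)
          ∘ₗ (tensorTensorTensorComm k _ _ (H ⊗[k] N) (H ⊗[k] M)).toLinearMap)
          ∘ₗ map (map (lTensor H comul ∘ₗ comul) (lTensor H comul ∘ₗ comul)) (map coactN coactM)
          ∘ₗ rTensor _ comul := by
        rw [IsAYDll] at hN hM
        rw [hN, hM, aydRHSll_eq, aydRHSll_eq, map_comp]
        simp only [comp_assoc]
        rw [← comp_assoc (rTensor _ comul), ← tensorTensorTensorComm_comp_map]
        simp only [comp_assoc]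
    _ = _ := by
        rw [eval, comp_assoc, map_comp_rTensor, rTensor_comp_map]

theorem aydRHSll_diagAct_codiagCoact (Sv : H →ₗ[k] H)
    (actN : H ⊗[k] N →ₗ[k] N) (coactN : N →ₗ[k] H ⊗[k] N)
    (actM : H ⊗[k] M →ₗ[k] M) (coactM : M →ₗ[k] H ⊗[k] M) :
    aydRHSll k H (N ⊗[k] M) Sv (diagAct k H M N actN actM) (codiagCoact k H M N coactN coactM)
      = tensorAydEval k H M N Sv actN actM
          ∘ₗ map (lTensor H (lTensor H (mk k H (H ⊗[k] H) 1)) ∘ₗ lTensor H (lTensor H comul)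
            ∘ₗ lTensor H comul ∘ₗ comul) (map coactN coactM) := by
  have eval : aydEval k H Sv (map actN actM ∘ₗ (tensorTensorTensorComm k H H N M).toLinearMap)
        ∘ₗ lTensor _ (mulTensor k H N M)
      = tensorAydEval k H M N Sv actN actM
          ∘ₗ rTensor _ (lTensor H (lTensor H (mk k H (H ⊗[k] H) 1))
            ∘ₗ lTensor H (TensorProduct.assoc k H H H).toLinearMap) := by
    ext; simp [mul_assoc]
  have coassoc₄ : lTensor H (TensorProduct.assoc k H H H).toLinearMap ∘ₗ lTensor H (rTensor H comul)
        ∘ₗ lTensor H comul ∘ₗ comul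
      = lTensor H (lTensor H comul) ∘ₗ lTensor H comul ∘ₗ (comul (R := k) (A := H)) := by
    simp only [coassoc_simps]
  rw [aydRHSll_eq, codiagCoact_eq, diagAct_eq, aydEval_comp_rTensor, comp_assoc, rTensor_comp_map,
    ← lTensor_comp_map, ← comp_assoc, eval, comp_assoc, rTensor_comp_map, comp_assoc,
    coassoc₄]

end Modules

theorem statement4
    (Sinv : H →ₗ[k] H)
    (actN : H ⊗[k] N →ₗ[k] N)
    (coactN : N →ₗ[k] H ⊗[k] N)
    -- `N` is a left-left Yetter-Drinfeld module
    (hydN : IsAYDll k H N (HopfAlgebra.antipode (R := k)) actN coactN)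
    (actM : H ⊗[k] M →ₗ[k] M)
    (coactM : M →ₗ[k] H ⊗[k] M)
    -- `M` is a left-left anti-Yetter-Drinfeld module
    (haydM : IsAYDll k H M Sinv actM coactM) :
    -- `N ⊗ M` is a left-left anti-Yetter-Drinfeld module
    IsAYDll k H (N ⊗[k] M) Sinv
      (diagAct k H M N actN actM) (codiagCoact k H M N coactN coactM) := by
  rw [IsAYDll, codiagCoact_comp_diagAct hydN haydM, contractMiddle_antipode_comp_comul,
    aydRHSll_diagAct_codiagCoact]
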